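/- arXiv:2605.28402 — 3 statements merged into one kernel-verified Lean document; each statement's English description precedes it below -/
import Mathlib

section
/- Let r, s ≥ 0 be integers with n = 2(r+s) ≥ 10, and let v ∈ (ℤ/4ℤ)^n have type (t₀, t₁, t₂, t₃) with t₀ + t₂ ≠ 0 and t₁ + t₃ ≠ 0. Then (n−1) · |λ(v)| ≤ C(n; r,s,r,s). -/
/-- The number of coordinates of `v ∈ (ℤ/4ℤ)^n` equal to `k`. -/
def typeCount {n : ℕ} (v : Fin n → ZMod 4) (k : ZMod 4) : ℕ :=
  (Finset.univ.filter fun i => v i = k).card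

/-- `v ∈ (ℤ/4ℤ)^n` has type `(t₀, t₁, t₂, t₃)`. -/
def HasType {n : ℕ} (v : Fin n → ZMod 4) (t0 t1 t2 t3 : ℕ) : Prop :=
  typeCount v 0 = t0 ∧ typeCount v 1 = t1 ∧ typeCount v 2 = t2 ∧ typeCount v 3 = t3

instance {n : ℕ} (v : Fin n → ZMod 4) (t0 t1 t2 t3 : ℕ) :
    Decidable (HasType v t0 t1 t2 t3) := by
  unfold HasType; infer_instance

/-- `|S(v, a)|`: the number of vectors `b` of type `(r, s, r, s)` with
`v · b = a` in `ℤ/4ℤ`. -/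
def Scard {n : ℕ} (r s : ℕ) (v : Fin n → ZMod 4) (a : ZMod 4) : ℕ :=
  (Finset.univ.filter fun b : Fin n → ZMod 4 =>
    HasType b r s r s ∧ (∑ i, v i * b i) = a).card

/-- The eigenvalue `λ(v) = |S(v,0)| - |S(v,2)|` of `Cay((ℤ/4ℤ)^n, S)`. -/
def lambdaEV {n : ℕ} (r s : ℕ) (v : Fin n → ZMod 4) : ℤ :=
  (Scard r s v 0 : ℤ) - (Scard r s v 2 : ℤ)

/-- The multinomial coefficient `C(n; r, s, r, s)` (with `n = 2(r+s)`). -/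
def multinomRSRS (r s : ℕ) : ℕ :=
  Nat.multinomial Finset.univ ![r, s, r, s]

/-
Since `λ` is invariant under permuting coordinates, averaging over the class `C` of all vectors of
the same type `t` as `v` gives `|C| λ(v) = ∑_{b ∈ S} ∑_{w ∈ C} Re i^{w·b}`. The inner sum is the
real part of the coefficient of `x^t` in `∏_l ∑_j i^{j b_l} x_j`, and for every `b ∈ S` this
product is `(p² - q²)^r (P² + Q²)^s` with `p = x₀ + x₂`, `q = x₁ + x₃`, `P = x₀ - x₂` and
`Q = x₁ - x₃`. So `|C| λ(v) = |S| c` for a single integer `c`, whose absolute value is at most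
the coefficient of `x^t` in `(p² + q²)^(r+s)`, while `|C|` is the coefficient of `x^t` in
`(p + q)^n`. Only the monomials `p^m q^(n-m)` with `m = t₀ + t₂` contribute to either
coefficient, so the claim reduces to `(2N - 1) C(N, h) ≤ C(2N, 2h)` for `N = r + s ≥ 5` and
`0 < h < N` (and is trivial for odd `m`); away from `h ∈ {1, N - 1}` this follows from
`C(N, h)² ≤ C(2N, 2h)` and `C(N, h) ≥ C(N, 2) ≥ 2N - 1`.
-/

open Finset MvPolynomial

lemma Nat.choose_two_le_choose {N h : ℕ} (h₂ : 2 ≤ h) (hh : 2 * h ≤ N) :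
    N.choose 2 ≤ N.choose h := by
  induction h, h₂ using Nat.le_induction with
  | base => rfl
  | succ h _ ih => exact (ih (by omega)).trans (Nat.choose_le_succ_of_lt_half_left (by omega))

lemma Nat.choose_mul_choose_le_choose_two_mul (N h : ℕ) :
    N.choose h * N.choose h ≤ (2 * N).choose (2 * h) := by
  rw [two_mul N, Nat.add_choose_eq]
  exact single_le_sum (f := fun ij : ℕ × ℕ => N.choose ij.1 * N.choose ij.2)
    (fun _ _ => Nat.zero_le _)
    (mem_antidiagonal.2 (two_mul h).symm : (h, h) ∈ antidiagonal (2 * h))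

theorem Nat.two_mul_sub_one_mul_choose_le {N h : ℕ} (hN : 5 ≤ N) (h₁ : 0 < h) (h₂ : h < N) :
    (2 * N - 1) * N.choose h ≤ (2 * N).choose (2 * h) := by
  wlog hh : 2 * h ≤ N generalizing h
  · have := this (h := N - h) (by omega) (by omega) (by omega)
    rwa [Nat.choose_symm h₂.le, show 2 * (N - h) = 2 * N - 2 * h by omega,
      Nat.choose_symm (by omega)] at this
  obtain rfl | h₂ := (Nat.one_le_iff_ne_zero.2 h₁.ne').eq_or_lt
  · rw [Nat.choose_one_right, Nat.choose_two_right,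
      show 2 * N * (2 * N - 1) = 2 * ((2 * N - 1) * N) by ring, Nat.mul_div_cancel_left _ two_pos]
  · have hN2 : 2 * N - 1 ≤ N.choose 2 := by
      rw [Nat.choose_two_right, Nat.le_div_iff_mul_le two_pos]
      calc (2 * N - 1) * 2 ≤ N * 4 := by omega
        _ ≤ N * (N - 1) := Nat.mul_le_mul_left _ (by omega)
    calc (2 * N - 1) * N.choose h ≤ N.choose h * N.choose h :=
          Nat.mul_le_mul_right _ (hN2.trans (Nat.choose_two_le_choose h₂ hh))
      _ ≤ _ := Nat.choose_mul_choose_le_choose_two_mul N h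

lemma mul_abs_le_of_mul_eq_mul {R : Type*} [CommRing R] [LinearOrder R] [IsStrictOrderedRing R]
    {a c K L S : R} (hK : 0 < K) (hS : 0 ≤ S) (h : K * L = S * c)
    (hc : a * |c| ≤ K) : a * |L| ≤ S := by
  refine le_of_mul_le_mul_left ?_ hK
  calc K * (a * |L|) = S * (a * |c|) := by
        rw [← abs_of_pos hK, ← abs_of_nonneg hS, mul_left_comm, ← abs_mul, h, abs_mul]; ring
    _ ≤ S * K := mul_le_mul_of_nonneg_left hc hS
    _ = K * S := mul_comm _ _

lemma AddChar.map_sum_eq_prod {A M ι : Type*} [AddCommMonoid A] [CommMonoid M]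
    (ψ : AddChar A M) (s : Finset ι) (f : ι → A) : ψ (∑ i ∈ s, f i) = ∏ i ∈ s, ψ (f i) := by
  induction s using Finset.cons_induction with
  | empty => simp
  | cons a s ha ih => rw [sum_cons, prod_cons, AddChar.map_add_eq_mul, ih]

lemma Zsqrtd.re_sum {d : ℤ} {ι : Type*} (s : Finset ι) (f : ι → ℤ√d) :
    (∑ i ∈ s, f i).re = ∑ i ∈ s, (f i).re :=
  map_sum (AddMonoidHom.mk' Zsqrtd.re Zsqrtd.re_add) f s

namespace Z4Eigenvalue

section ValueCount

variable {ι α : Type*} [Fintype ι]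

noncomputable def valueCount (w : ι → α) : α →₀ ℕ :=
  ∑ l, Finsupp.single (w l) 1

lemma valueCount_apply [DecidableEq α] (w : ι → α) (j : α) :
    valueCount w j = #{l | w l = j} := by
  simp only [valueCount, Finsupp.finsetSum_apply, Finsupp.single_apply, card_filter]

lemma sum_valueCount [Fintype α] [DecidableEq α] (w : ι → α) :
    ∑ j, valueCount w j = Fintype.card ι := by
  simp only [valueCount_apply]
  exact (card_eq_sum_card_fiberwise fun l _ => mem_univ (w l)).symm

lemma valueCount_comp_perm (w : ι → α) (σ : Equiv.Perm ι) :
    valueCount (w ∘ σ) = valueCount w :=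
  Equiv.sum_comp σ fun l => Finsupp.single (w l) 1

lemma exists_perm_of_valueCount_eq {v w : ι → α} (h : valueCount w = valueCount v) :
    ∃ σ : Equiv.Perm ι, v ∘ σ = w := by
  classical
  have hcard (j : α) : Fintype.card {l // w l = j} = Fintype.card {l // v l = j} := by
    simpa only [Fintype.card_subtype, valueCount_apply] using DFunLike.congr_fun h j
  let F (j : α) : {l // w l = j} ≃ {l // v l = j} := Fintype.equivOfCardEq (hcard j)
  refine ⟨(Equiv.sigmaFiberEquiv w).symm.trans
    ((Equiv.sigmaCongrRight F).trans (Equiv.sigmaFiberEquiv v)), funext fun l => ?_⟩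
  exact (F (w l) ⟨l, rfl⟩).prop

lemma prod_comp_eq_prod_pow_valueCount [Fintype α] [DecidableEq α] {M : Type*} [CommMonoid M]
    (w : ι → α) (f : α → M) : ∏ l, f (w l) = ∏ j, f j ^ valueCount w j := by
  simp only [valueCount_apply, ← prod_const]
  exact (prod_fiberwise_of_maps_to' (fun l _ => mem_univ (w l)) f).symm

variable [DecidableEq ι] [Fintype α] [DecidableEq α] {R : Type*} [CommSemiring R]

theorem coeff_prod_sum_C_mul_X (f : ι → α → R) (d : α →₀ ℕ) :
    coeff d (∏ l, ∑ j, C (f l j) * X j) =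
      ∑ w : ι → α with valueCount w = d, ∏ l, f l (w l) := by
  have hterm (w : ι → α) :
      ∏ l, C (f l (w l)) * X (w l) = monomial (valueCount w) (∏ l, f l (w l)) := by
    have hX : ∏ l, (X (w l) : MvPolynomial α R) = monomial (valueCount w) 1 := by
      rw [valueCount]
      induction (univ : Finset ι) using Finset.cons_induction with
      | empty => simp
      | cons a s ha ih => rw [prod_cons, sum_cons, ih, X, monomial_mul, one_mul]
    rw [prod_mul_distrib, ← map_prod, hX, C_mul_monomial, mul_one]
  simp only [prod_univ_sum, Fintype.piFinset_univ, hterm, coeff_sum, coeff_monomial, sum_filter]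

theorem card_valueCount_eq_coeff_sum_X_pow (d : α →₀ ℕ) :
    (#{w : ι → α | valueCount w = d} : R) =
      coeff d ((∑ j, X j : MvPolynomial α R) ^ Fintype.card ι) := by
  have h := coeff_prod_sum_C_mul_X (ι := ι) (fun _ _ => (1 : R)) d
  simp only [map_one, one_mul, prod_const_one, sum_const, nsmul_one, prod_const, card_univ] at h
  exact h.symm

end ValueCount

section CoeffDominated

variable {σ R : Type*} [CommRing R] [LinearOrder R] [IsStrictOrderedRing R]

def CoeffDominated (f g : MvPolynomial σ R) : Prop :=
  ∀ d, |coeff d f| ≤ coeff d g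

namespace CoeffDominated

variable {f₁ f₂ g₁ g₂ f g : MvPolynomial σ R}

lemma coeff_nonneg (h : CoeffDominated f g) (d : σ →₀ ℕ) : 0 ≤ coeff d g :=
  (abs_nonneg _).trans (h d)

lemma add (h₁ : CoeffDominated f₁ g₁) (h₂ : CoeffDominated f₂ g₂) :
    CoeffDominated (f₁ + f₂) (g₁ + g₂) := fun d => by
  rw [coeff_add, coeff_add]
  exact (abs_add_le _ _).trans (add_le_add (h₁ d) (h₂ d))

lemma sub (h₁ : CoeffDominated f₁ g₁) (h₂ : CoeffDominated f₂ g₂) :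
    CoeffDominated (f₁ - f₂) (g₁ + g₂) := fun d => by
  rw [coeff_sub, coeff_add]
  exact (abs_sub _ _).trans (add_le_add (h₁ d) (h₂ d))

lemma mul (h₁ : CoeffDominated f₁ g₁) (h₂ : CoeffDominated f₂ g₂) :
    CoeffDominated (f₁ * f₂) (g₁ * g₂) := fun d => by
  classical
  rw [coeff_mul, coeff_mul]
  refine (abs_sum_le_sum_abs _ _).trans (sum_le_sum fun x _ => ?_)
  rw [abs_mul]
  exact mul_le_mul (h₁ x.1) (h₂ x.2) (abs_nonneg _) (h₁.coeff_nonneg x.1)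

lemma one : CoeffDominated (1 : MvPolynomial σ R) 1 := fun d => by
  classical
  rw [coeff_one]
  split_ifs <;> simp

lemma pow (h : CoeffDominated f g) (m : ℕ) : CoeffDominated (f ^ m) (g ^ m) := by
  induction m with
  | zero => simpa using one
  | succ m ih => simpa only [pow_succ] using ih.mul h

end CoeffDominated

lemma coeffDominated_X (i : σ) : CoeffDominated (X i : MvPolynomial σ R) (X i) := fun d => by
  classical
  rw [coeff_X]
  split_ifs <;> simp

end CoeffDominated

lemma sum_zmod4 {M : Type*} [AddCommMonoid M] (f : ZMod 4 → M) :
    ∑ j, f j = f 0 + f 1 + f 2 + f 3 :=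
  Fin.sum_univ_four f

lemma prod_zmod4 {M : Type*} [CommMonoid M] (f : ZMod 4 → M) :
    ∏ j, f j = f 0 * f 1 * f 2 * f 3 :=
  Fin.prod_univ_four f

noncomputable def typeFinsupp (t0 t1 t2 t3 : ℕ) : ZMod 4 →₀ ℕ :=
  Finsupp.equivFunOnFinite.symm ![t0, t1, t2, t3]

lemma hasType_iff_valueCount_eq {n : ℕ} {v : Fin n → ZMod 4} {t0 t1 t2 t3 : ℕ} :
    HasType v t0 t1 t2 t3 ↔ valueCount v = typeFinsupp t0 t1 t2 t3 := by
  rw [Finsupp.ext_iff, HasType]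
  simp only [typeCount, ← valueCount_apply]
  constructor
  · rintro ⟨h0, h1, h2, h3⟩ j
    fin_cases j
    exacts [h0, h1, h2, h3]
  · intro h
    exact ⟨h 0, h 1, h 2, h 3⟩

lemma multinomRSRS_eq (r s : ℕ) : multinomRSRS r s = (typeFinsupp r s r s).multinomial :=
  ((Finsupp.multinomial_eq_of_support_subset (f := typeFinsupp r s r s) (subset_univ _))).symm

def chi : AddChar (ZMod 4) GaussianInt := AddChar.zmodChar 4 (ζ := ⟨0, 1⟩) (by decide)

lemma chi_re : ∀ x : ZMod 4, (chi x).re = (if x = 0 then 1 else 0) - (if x = 2 then 1 else 0) :=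
  by decide

variable {n : ℕ}

lemma lambdaEV_eq_sum_re (r s : ℕ) (v : Fin n → ZMod 4) :
    lambdaEV r s v =
      ∑ b : Fin n → ZMod 4 with HasType b r s r s, (chi (∑ i, v i * b i)).re := by
  simp only [lambdaEV, Scard, chi_re, sum_sub_distrib, ← filter_filter, natCast_card_filter]

lemma hasType_comp_perm {b : Fin n → ZMod 4} {t0 t1 t2 t3 : ℕ} (σ : Equiv.Perm (Fin n)) :
    HasType (b ∘ σ) t0 t1 t2 t3 ↔ HasType b t0 t1 t2 t3 := by
  rw [hasType_iff_valueCount_eq, hasType_iff_valueCount_eq, valueCount_comp_perm]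

lemma lambdaEV_comp_perm (r s : ℕ) (v : Fin n → ZMod 4) (σ : Equiv.Perm (Fin n)) :
    lambdaEV r s (v ∘ σ) = lambdaEV r s v := by
  rw [lambdaEV_eq_sum_re, lambdaEV_eq_sum_re]
  refine sum_equiv (σ.arrowCongr (Equiv.refl _)) (fun b => ?_) (fun b _ => ?_)
  · rw [mem_filter_univ, mem_filter_univ]
    exact (hasType_comp_perm σ.symm).symm
  · simpa using congrArg (fun x => (chi x).re) (Equiv.sum_comp σ fun i => v i * b (σ.symm i))

noncomputable def evenSum : MvPolynomial (ZMod 4) ℤ := X 0 + X 2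
noncomputable def oddSum : MvPolynomial (ZMod 4) ℤ := X 1 + X 3

noncomputable def spectralPoly (r s : ℕ) : MvPolynomial (ZMod 4) ℤ :=
  (evenSum ^ 2 - oddSum ^ 2) ^ r * ((X 0 - X 2) ^ 2 + (X 1 - X 3) ^ 2) ^ s

noncomputable def charForm (β : ZMod 4) : MvPolynomial (ZMod 4) GaussianInt :=
  ∑ j, C (chi (j * β)) * X j

lemma charForm_eq (β : ZMod 4) :
    charForm β = X 0 + C (chi β) * X 1 + C (chi β ^ 2) * X 2 + C (chi β ^ 3) * X 3 := by
  have h (j : ZMod 4) : chi (j * β) = chi β ^ j.val := by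
    rw [← AddChar.map_nsmul_eq_pow, nsmul_eq_mul, ZMod.natCast_zmod_val]
  simp only [charForm, sum_zmod4, h]
  simp [show (1 : ZMod 4).val = 1 from rfl, show (2 : ZMod 4).val = 2 from rfl,
    show (3 : ZMod 4).val = 3 from rfl]

lemma charForm_zero_mul_charForm_two :
    charForm 0 * charForm 2 =
      MvPolynomial.map (Int.castRingHom _) (evenSum ^ 2 - oddSum ^ 2) := by
  rw [charForm_eq, charForm_eq, show chi 2 = -1 by decide]
  simp only [AddChar.map_zero_eq_one, C_1, one_mul, one_pow, C_neg, neg_mul, even_two,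
    Even.neg_pow, evenSum, oddSum, map_sub, map_pow, map_add, map_X]
  ring

lemma charForm_one_mul_charForm_three :
    charForm 1 * charForm 3 =
      MvPolynomial.map (Int.castRingHom _) ((X 0 - X 2) ^ 2 + (X 1 - X 3) ^ 2) := by
  rw [charForm_eq, charForm_eq, show chi 3 ^ 2 = -1 by decide, show chi 3 ^ 3 = chi 1 by decide,
    show chi 3 = -chi 1 by decide, show chi 1 ^ 2 = -1 by decide, show chi 1 ^ 3 = -chi 1 by decide]
  have hi : C (chi 1) ^ 2 = (-1 : MvPolynomial (ZMod 4) GaussianInt) := by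
    rw [← map_pow, show chi 1 ^ 2 = -1 by decide, map_neg, map_one]
  simp only [C_neg, C_1, neg_mul, one_mul, map_add, map_pow, map_sub, map_X]
  linear_combination (-(X 1 - X 3 : MvPolynomial (ZMod 4) GaussianInt) ^ 2) * hi

lemma prod_charForm_of_hasType {r s : ℕ} {b : Fin n → ZMod 4} (hb : HasType b r s r s) :
    ∏ l, charForm (b l) = MvPolynomial.map (Int.castRingHom _) (spectralPoly r s) := by
  rw [prod_comp_eq_prod_pow_valueCount, hasType_iff_valueCount_eq.1 hb, prod_zmod4]
  change charForm 0 ^ r * charForm 1 ^ s * charForm 2 ^ r * charForm 3 ^ s = _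
  rw [spectralPoly, map_mul, map_pow, map_pow, ← charForm_zero_mul_charForm_two,
    ← charForm_one_mul_charForm_three]
  ring

lemma sum_re_chi_eq_coeff {r s : ℕ} {b : Fin n → ZMod 4} (hb : HasType b r s r s)
    (d : ZMod 4 →₀ ℕ) :
    ∑ w : Fin n → ZMod 4 with valueCount w = d, (chi (∑ l, w l * b l)).re =
      coeff d (spectralPoly r s) := by
  have h := coeff_prod_sum_C_mul_X (fun l j => chi (j * b l)) d
  rw [show ∏ l, ∑ j, C (chi (j * b l)) * X j = ∏ l, charForm (b l) from rfl,
    prod_charForm_of_hasType hb, coeff_map] at h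
  simp only [← AddChar.map_sum_eq_prod] at h
  rw [← Zsqrtd.re_sum, ← h]
  exact Zsqrtd.re_intCast _

theorem card_mul_lambdaEV (r s : ℕ) (v : Fin n → ZMod 4) :
    (#{w : Fin n → ZMod 4 | valueCount w = valueCount v} : ℤ) * lambdaEV r s v =
      #{b : Fin n → ZMod 4 | HasType b r s r s} * coeff (valueCount v) (spectralPoly r s) := by
  have hconst (w : Fin n → ZMod 4) (hw : w ∈ ({w | valueCount w = valueCount v} : Finset _)) :
      lambdaEV r s w = lambdaEV r s v := by
    obtain ⟨σ, rfl⟩ := exists_perm_of_valueCount_eq (mem_filter.1 hw).2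
    exact lambdaEV_comp_perm r s v σ
  calc (#{w : Fin n → ZMod 4 | valueCount w = valueCount v} : ℤ) * lambdaEV r s v
      = ∑ w with valueCount w = valueCount v, lambdaEV r s w := by
        rw [sum_congr rfl hconst, sum_const, nsmul_eq_mul]
    _ = ∑ b with HasType b r s r s, ∑ w with valueCount w = valueCount v,
          (chi (∑ l, w l * b l)).re := by
        simp only [lambdaEV_eq_sum_re]
        exact sum_comm
    _ = _ := by
        rw [sum_congr rfl fun b hb => sum_re_chi_eq_coeff (mem_filter.1 hb).2 _, sum_const,
          nsmul_eq_mul]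

lemma coeffDominated_evenSum : CoeffDominated evenSum evenSum :=
  (coeffDominated_X 0).add (coeffDominated_X 2)

lemma coeffDominated_oddSum : CoeffDominated oddSum oddSum :=
  (coeffDominated_X 1).add (coeffDominated_X 3)

lemma coeffDominated_spectralPoly (r s : ℕ) :
    CoeffDominated (spectralPoly r s) ((evenSum ^ 2 + oddSum ^ 2) ^ (r + s)) := by
  have h₁ : CoeffDominated (evenSum ^ 2 - oddSum ^ 2) (evenSum ^ 2 + oddSum ^ 2) :=
    (coeffDominated_evenSum.pow 2).sub (coeffDominated_oddSum.pow 2)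
  have h₂ : CoeffDominated ((X 0 - X 2) ^ 2 + (X 1 - X 3) ^ 2) (evenSum ^ 2 + oddSum ^ 2) :=
    (((coeffDominated_X 0).sub (coeffDominated_X 2)).pow 2).add
      (((coeffDominated_X 1).sub (coeffDominated_X 3)).pow 2)
  rw [pow_add]
  exact (h₁.pow r).mul (h₂.pow s)

def evenWeight : ZMod 4 → ℕ := ![1, 0, 1, 0]

lemma weight_evenWeight (d : ZMod 4 →₀ ℕ) : Finsupp.weight evenWeight d = d 0 + d 2 := by
  rw [Finsupp.weight_apply, Finsupp.sum_fintype _ _ (by simp), sum_zmod4]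
  simp [evenWeight]

lemma coeff_evenSum_pow_mul_oddSum_pow_eq_zero {d : ZMod 4 →₀ ℕ} {a : ℕ} (b : ℕ)
    (h : d 0 + d 2 ≠ a) : coeff d (evenSum ^ a * oddSum ^ b) = 0 := by
  have hp : IsWeightedHomogeneous evenWeight evenSum 1 :=
    (isWeightedHomogeneous_X _ _ 0).add (isWeightedHomogeneous_X _ _ 2)
  have hq : IsWeightedHomogeneous evenWeight oddSum 0 :=
    (isWeightedHomogeneous_X _ _ 1).add (isWeightedHomogeneous_X _ _ 3)
  refine ((hp.pow a).mul (hq.pow b)).coeff_eq_zero d ?_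
  simpa [weight_evenWeight] using h

lemma coeff_pow_add_pow_pow (d : ZMod 4 →₀ ℕ) {a k : ℕ} (ha : 0 < a)
    (hk : a * k = d 0 + d 2) (N : ℕ) :
    coeff d ((evenSum ^ a + oddSum ^ a) ^ N) =
      N.choose k * coeff d (evenSum ^ (a * k) * oddSum ^ (a * (N - k))) := by
  rw [add_pow, coeff_sum, sum_eq_single k]
  · rw [← pow_mul, ← pow_mul, ← Nat.cast_comm, ← C_eq_coe_nat, coeff_C_mul]
  · intro j _ hj
    rw [← pow_mul, ← pow_mul, mul_comm, ← C_eq_coe_nat, coeff_C_mul,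
      coeff_evenSum_pow_mul_oddSum_pow_eq_zero _
        fun h => hj (Nat.eq_of_mul_eq_mul_left ha (h.symm.trans hk.symm)), mul_zero]
  · intro hk
    rw [Nat.choose_eq_zero_of_lt (by simpa using hk), Nat.cast_zero, mul_zero, coeff_zero]

lemma coeff_pow_add_pow_pow_eq_zero (d : ZMod 4 →₀ ℕ) {a : ℕ} (N : ℕ)
    (h : ¬ a ∣ d 0 + d 2) :
    coeff d ((evenSum ^ a + oddSum ^ a) ^ N) = 0 := by
  rw [add_pow, coeff_sum]
  refine sum_eq_zero fun j _ => ?_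
  rw [← pow_mul, ← pow_mul, mul_comm, ← C_eq_coe_nat, coeff_C_mul,
    coeff_evenSum_pow_mul_oddSum_pow_eq_zero _ fun hj => h ⟨j, hj⟩, mul_zero]

theorem two_mul_sub_one_mul_coeff_le {N : ℕ} (d : ZMod 4 →₀ ℕ) (hN : 5 ≤ N)
    (h₁ : 0 < d 0 + d 2) (h₂ : d 0 + d 2 < 2 * N) :
    (((2 * N : ℕ) : ℤ) - 1) * coeff d ((evenSum ^ 2 + oddSum ^ 2) ^ N) ≤
      coeff d ((evenSum + oddSum) ^ (2 * N)) := by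
  have hpow := coeff_pow_add_pow_pow d one_pos (one_mul _) (2 * N)
  simp only [pow_one, one_mul] at hpow
  have hnonneg (m k : ℕ) : 0 ≤ coeff d (evenSum ^ m * oddSum ^ k) :=
    ((coeffDominated_evenSum.pow m).mul (coeffDominated_oddSum.pow k)).coeff_nonneg d
  obtain ⟨h, hm | hm⟩ := Nat.even_or_odd' (d 0 + d 2)
  · have hchoose := Nat.two_mul_sub_one_mul_choose_le hN (h := h) (by omega) (by omega)
    rw [coeff_pow_add_pow_pow d two_pos hm.symm N, hpow, hm,
      show 2 * (N - h) = 2 * N - 2 * h by omega, ← mul_assoc]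
    gcongr
    · exact hnonneg _ _
    · zify [(by omega : 1 ≤ 2 * N)] at hchoose
      exact_mod_cast hchoose
  · rw [coeff_pow_add_pow_pow_eq_zero d N (by omega), mul_zero, hpow]
    exact mul_nonneg (Nat.cast_nonneg _) (hnonneg _ _)

lemma card_valueCount_eq_coeff_evenSum_add_oddSum_pow (v : Fin n → ZMod 4) :
    (#{w : Fin n → ZMod 4 | valueCount w = valueCount v} : ℤ) =
      coeff (valueCount v) ((evenSum + oddSum) ^ n) := by
  rw [card_valueCount_eq_coeff_sum_X_pow, sum_zmod4, Fintype.card_fin, evenSum, oddSum]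
  ring_nf

lemma card_hasType_eq_multinomRSRS {r s : ℕ} (hn : n = 2 * (r + s)) :
    #{b : Fin n → ZMod 4 | HasType b r s r s} = multinomRSRS r s := by
  simp only [hasType_iff_valueCount_eq]
  rw [← Nat.cast_id (#_), card_valueCount_eq_coeff_sum_X_pow, coeff_sum_X_pow_of_fintype,
    multinomRSRS_eq, Finsupp.sum_fintype _ _ fun _ => rfl, sum_zmod4, Fintype.card_fin, if_pos]
  · rfl
  · change r + s + r + s = n
    omega

end Z4Eigenvalue

open Z4Eigenvalue in
/-- for `n = 2(r+s) ≥ 10` and `v` of type `(t₀,t₁,t₂,t₃)` with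
`t₀+t₂ ≠ 0` and `t₁+t₃ ≠ 0`, one has `(n-1)·|λ(v)| ≤ C(n; r,s,r,s)`. -/
theorem abs_lambda_le (r s n : ℕ) (hn : n = 2 * (r + s)) (hn10 : 10 ≤ n)
    (v : Fin n → ZMod 4) (t0 t1 t2 t3 : ℕ) (hv : HasType v t0 t1 t2 t3)
    (h02 : t0 + t2 ≠ 0) (h13 : t1 + t3 ≠ 0) :
    ((n : ℤ) - 1) * |lambdaEV r s v| ≤ (multinomRSRS r s : ℤ) := by
  have hd := hasType_iff_valueCount_eq.1 hv
  have hsum : t0 + t1 + t2 + t3 = n := by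
    have h := sum_valueCount v
    rwa [hd, sum_zmod4, Fintype.card_fin] at h
  have hd02 : valueCount v 0 + valueCount v 2 = t0 + t2 := by rw [hd]; rfl
  have hkey := card_mul_lambdaEV r s v
  have hdom := coeffDominated_spectralPoly r s (valueCount v)
  have hcmp := two_mul_sub_one_mul_coeff_le (N := r + s) (valueCount v) (by omega) (by omega)
    (by omega)
  rw [← hn, ← card_valueCount_eq_coeff_evenSum_add_oddSum_pow] at hcmp
  rw [card_hasType_eq_multinomRSRS hn] at hkey
  have hcls : (0 : ℤ) < #{w : Fin n → ZMod 4 | valueCount w = valueCount v} :=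
    Nat.cast_pos.2 (card_pos.2 ⟨v, mem_filter.2 ⟨mem_univ v, rfl⟩⟩)
  have hn1 : (0 : ℤ) ≤ n - 1 := by linarith [(by exact_mod_cast hn10 : (10 : ℤ) ≤ n)]
  exact mul_abs_le_of_mul_eq_mul hcls (Nat.cast_nonneg _) hkey
    ((mul_le_mul_of_nonneg_left hdom hn1).trans hcmp)
end

section
/- Let r, s ≥ 0 be integers with n = 2(r+s) ≥ 1. For every v ∈ (ℤ/4ℤ)^n, λ(v + 𝟏) = (−1)^r · λ(v), where 𝟏 ∈ (ℤ/4ℤ)^n denotes the all-one vector. -/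
lemma sum_of_hasType {n : ℕ} {r s : ℕ} {b : Fin n → ZMod 4}
    (hb : HasType b r s r s) : (∑ i, b i) = 2 * (r : ZMod 4) := by
  obtain ⟨h0, h1, h2, h3⟩ := hb
  have key : (∑ i, b i) = ∑ k : ZMod 4, ∑ i ∈ Finset.univ.filter (fun i => b i = k), b i := by
    rw [Finset.sum_fiberwise]
  rw [key]
  have : ∀ k : ZMod 4, (∑ i ∈ Finset.univ.filter (fun i => b i = k), b i)
      = (typeCount b k : ZMod 4) * k := by
    intro k
    rw [Finset.sum_congr rfl (fun i hi => (Finset.mem_filter.mp hi).2),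
      Finset.sum_const, typeCount, nsmul_eq_mul]
  rw [Finset.sum_congr rfl (fun k _ => this k)]
  have h4 : (Finset.univ : Finset (ZMod 4)) = {0, 1, 2, 3} := by decide
  rw [h4, Finset.sum_insert (by decide), Finset.sum_insert (by decide),
    Finset.sum_insert (by decide), Finset.sum_singleton, h0, h1, h2, h3,
    show (3:ZMod 4) = -1 by decide]
  ring

lemma Scard_shift {n : ℕ} (r s : ℕ) (v : Fin n → ZMod 4) (a : ZMod 4) :
    Scard r s (fun i => v i + 1) a = Scard r s v (a - 2 * (r : ZMod 4)) := by
  unfold Scard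
  congr 1
  apply Finset.filter_congr
  intro b _
  simp only [eq_iff_iff]
  have hsum : ∀ (_ : HasType b r s r s),
      (∑ i, (v i + 1) * b i) = (∑ i, v i * b i) + 2 * (r : ZMod 4) := by
    intro hb
    simp only [add_mul, one_mul, Finset.sum_add_distrib, sum_of_hasType hb]
  constructor
  · rintro ⟨hb, h⟩
    exact ⟨hb, by rw [hsum hb] at h; rw [← h]; ring⟩
  · rintro ⟨hb, h⟩
    exact ⟨hb, by rw [hsum hb, h]; ring⟩

/-- `λ(v + 𝟏) = (-1)^r · λ(v)` where `𝟏` is the all-one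
vector in `(ℤ/4ℤ)^n`. -/
theorem lambda_add_one (r s n : ℕ) (hn : n = 2 * (r + s)) (hn1 : 1 ≤ n)
    (v : Fin n → ZMod 4) :
    lambdaEV r s (fun i => v i + 1) = (-1 : ℤ) ^ r * lambdaEV r s v := by
  rcases Nat.even_or_odd r with ⟨m, hm⟩ | ⟨m, hm⟩
  · have h2r : 2 * (r : ZMod 4) = 0 := by
      subst hm; push_cast; ring_nf
      rw [show ((4:ZMod 4)) = 0 by decide]; ring
    have hneg : (-1 : ℤ) ^ r = 1 := by
      subst hm; rw [← two_mul, pow_mul]; norm_num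
    rw [hneg, lambdaEV, lambdaEV, Scard_shift, Scard_shift, h2r]
    simp
  · have h2r : 2 * (r : ZMod 4) = 2 := by
      subst hm; push_cast; ring_nf
      rw [show ((4:ZMod 4)) = 0 by decide]; ring
    have hneg : (-1 : ℤ) ^ r = -1 := by
      subst hm; rw [pow_add, pow_mul]; norm_num
    rw [hneg, lambdaEV, lambdaEV, Scard_shift, Scard_shift, h2r]
    norm_num
    rw [show ((-2:ZMod 4)) = 2 by decide]
end

section
/- For every integer n ≥ 2 and every real number x, K_4(x) ≥ −n²/4 + 3n/4 − 2/3, where K_4 is the binary Krawtchouk polynomial of degree 4 with parameter n. (Consequently the smallest eigenvalue of the distance-4 binary Hamming graph H(n,4) is at least −n²/4 + 3n/4 − 2/3.) -/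
/-- The binary Krawtchouk polynomial `K_j` with parameter `n`, as a real
function: `K_j(x) = Σ_{i=0}^{j} (-1)^i C(x,i) C(n-x, j-i)` where `C(y,i)` is
the generalized binomial coefficient. -/
noncomputable def krawF (n j : ℕ) (x : ℝ) : ℝ :=
  ∑ i ∈ Finset.range (j + 1),
    (-1 : ℝ) ^ i * ((descPochhammer ℝ i).eval x / (i.factorial : ℝ)) *
      ((descPochhammer ℝ (j - i)).eval ((n : ℝ) - x) / ((j - i).factorial : ℝ))

lemma kraw4_eq (n : ℕ) (x : ℝ) :
    krawF n 4 x = (((2*x - n)^2 - 3*n + 4)^2) / 24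
      + (-(n : ℝ) ^ 2 / 4 + 3 * (n : ℝ) / 4 - 2 / 3) := by
  have h : ∀ k : ℕ, ∀ y : ℝ, (descPochhammer ℝ (k+1)).eval y
      = (descPochhammer ℝ k).eval y * (y - k) := by
    intro k y; rw [descPochhammer_succ_eval]
  simp only [krawF, Finset.sum_range_succ, Finset.sum_range_zero]
  norm_num [h, descPochhammer_zero, Nat.factorial]
  ring

/-- for every `n ≥ 2` and every real `x`,
`K_4(x) ≥ -n²/4 + 3n/4 - 2/3`; in particular the smallest eigenvalue of the
Hamming graph `H(n,4)` is at least this value. -/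
theorem kraw4_lower_bound (n : ℕ) (hn : 2 ≤ n) (x : ℝ) :
    krawF n 4 x ≥ -(n : ℝ) ^ 2 / 4 + 3 * (n : ℝ) / 4 - 2 / 3 := by
  rw [kraw4_eq]
  have := sq_nonneg ((2*x - n)^2 - 3*n + 4)
  linarith
end
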